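/- arXiv:2301.05313 — 2 statements merged into one kernel-verified Lean document; each statement's English description precedes it below -/
import Mathlib

section
/- Let q be a prime power and let b be a positive integer with q > b. Let H_Y be the Hilbert function of the set Y of F_q-rational points of P(1,1,b). Write d = d₀b + r₀ with 0 ≤ r₀ < b, and when d > q also write d = q + kb + r with k, r ∈ ℕ and 0 ≤ r < b. Set κ = q − r₀ if 0 < r₀ < b and κ = q + 1 if r₀ = 0. Then: H_Y(d) = d + 1 if 0 ≤ d ≤ b−1; H_Y(d) = (d₀+1)(d+1) − b·d₀(d₀+1)/2 if b ≤ d ≤ q; H_Y(d) = (k+1)(q+1) + (d₀−k)(d+1) − b·(d₀(d₀+1) − k(k+1))/2 if q+1 ≤ d ≤ qb; H_Y(d) = b(k+q)(k−q+1)/2 + q(k+d+1) − dk − bd₀ + κ if d > qb and k < q; and H_Y(d) = q² + r₀ + κ if d > qb and k ≥ q. -/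
/-!
Over `𝔽_q`, the functions `t ↦ t ^ m` and `t ↦ t ^ m'` agree when `m` and `m'` are both
zero or both positive and congruent modulo `q - 1`. So the image of `S_d` in the functions
on `𝔽_q³ ∖ {0}` is spanned by the monomials with exponents reduced into `{0} ∪ [1, q - 1]`,
and the nonconstant reduced monomials are linearly independent there: `H_Y(d)` is the
number of reduced exponent triples of monomials of degree `d`.

A reduced triple `(a₁, a₂, a₃)` with `a₁ + a₂ > 0` occurs iff `a₁ + a₂ + b a₃ ≤ d` and
`a₁ + a₂ + b a₃ ≡ d (mod q - 1)`, since the surplus multiple of `q - 1` can be put on a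
positive one of `a₁, a₂`; the triples with `a₁ = a₂ = 0` contribute one when `b ∣ d`.
For fixed `a₃ = j` there are `min (d - b j + 1) (q + 1)` such pairs `(a₁, a₂)` when
`b j < d`, and summing these arithmetic progressions gives the five closed forms.
-/

open MvPolynomial

noncomputable section

variable (F : Type) [Field F] [Fintype F]

/-- The submodule of polynomials vanishing at every nonzero point of `F³`. -/
def vanishing : Submodule F (MvPolynomial (Fin 3) F) where
  carrier := {f | ∀ y : Fin 3 → F, y ≠ 0 → eval y f = 0}
  add_mem' := fun hf hg y hy => by simp [hf y hy, hg y hy]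
  zero_mem' := fun y hy => by simp
  smul_mem' := fun c f hf y hy => by simp [MvPolynomial.smul_eval, hf y hy]

/-- `S_d`: the degree-`d` weighted-homogeneous piece (weights `1, 1, b`). -/
def Sd (b d : ℕ) : Submodule F (MvPolynomial (Fin 3) F) :=
  weightedHomogeneousSubmodule F ![1, 1, b] d

/-- `I_d`: the degree-`d` piece of the vanishing ideal of `ℙ(1,1,b)(F_q)`. -/
def Id' (b d : ℕ) : Submodule F (MvPolynomial (Fin 3) F) := Sd F b d ⊓ vanishing F

/-- The Hilbert function `H_Y(d) = dim S_d − dim I_d` of `Y = ℙ(1,1,b)(F_q)`. -/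
def HY (b d : ℕ) : ℕ :=
  Module.finrank F ↥(Sd F b d) - Module.finrank F ↥(Id' F b d)

open Finset

-- `0` stays `0`; a positive `m` goes to its representative modulo `q - 1` in `[1, q - 1]`.
def reduceExp (q m : ℕ) : ℕ := if m = 0 then 0 else (m - 1) % (q - 1) + 1

section ReduceExp

variable {q : ℕ}

@[simp]
lemma reduceExp_zero : reduceExp q 0 = 0 := rfl

@[simp]
lemma reduceExp_eq_zero_iff {m : ℕ} : reduceExp q m = 0 ↔ m = 0 := by
  unfold reduceExp; split <;> omega

lemma reduceExp_le (hq : 1 < q) (m : ℕ) : reduceExp q m ≤ q - 1 := by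
  unfold reduceExp; split
  · omega
  · have := Nat.mod_lt (m - 1) (show 0 < q - 1 by omega); omega

lemma reduceExp_of_le {m : ℕ} (hm : m ≤ q - 1) : reduceExp q m = m := by
  unfold reduceExp; split
  · omega
  · rw [Nat.mod_eq_of_lt (by omega)]; omega

lemma exists_eq_reduceExp_add_mul (m : ℕ) : ∃ t, m = reduceExp q m + (q - 1) * t := by
  unfold reduceExp; split
  · exact ⟨0, by omega⟩
  · have := Nat.mod_add_div (m - 1) (q - 1)
    exact ⟨(m - 1) / (q - 1), by omega⟩

lemma reduceExp_add_mul {a : ℕ} (ha : 0 < a) (t : ℕ) :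
    reduceExp q (a + (q - 1) * t) = reduceExp q a := by
  unfold reduceExp
  rw [if_neg (by omega), if_neg (by omega),
    show a + (q - 1) * t - 1 = a - 1 + (q - 1) * t by omega, Nat.add_mul_mod_self_left]

lemma eq_reduceExp_or_eq_reduceExp_add {s : ℕ} (hs₀ : s ≠ 0)
    (hs : s ≤ 2 * (q - 1)) : s = reduceExp q s ∨ s = reduceExp q s + (q - 1) := by
  obtain ⟨v, hv⟩ := exists_eq_reduceExp_add_mul (q := q) s
  have hpos : reduceExp q s ≠ 0 := reduceExp_eq_zero_iff.not.mpr hs₀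
  rcases v with _ | _ | v
  · left; omega
  · right; omega
  · have : (q - 1) * 2 ≤ (q - 1) * (v + 1 + 1) := Nat.mul_le_mul_left _ (by omega)
    omega

lemma reduceExp_eq_of_dvd_sub {s e : ℕ} (hs₀ : s ≠ 0) (hse : s ≤ e) (hdvd : (q - 1) ∣ e - s) :
    reduceExp q e = reduceExp q s := by
  obtain ⟨u, hu⟩ := hdvd
  rw [show e = s + (q - 1) * u by omega, reduceExp_add_mul (Nat.pos_of_ne_zero hs₀)]

end ReduceExp

section Exponents

variable {q b d : ℕ}

def expsOfDegree (b d : ℕ) : Finset (ℕ × ℕ × ℕ) :=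
  (range (d + 1) ×ˢ range (d + 1) ×ˢ range (d + 1)).filter fun m => m.1 + m.2.1 + b * m.2.2 = d

lemma mem_expsOfDegree (hb : 0 < b) {m : ℕ × ℕ × ℕ} :
    m ∈ expsOfDegree b d ↔ m.1 + m.2.1 + b * m.2.2 = d := by
  simp only [expsOfDegree, mem_filter, mem_product, mem_range, and_iff_right_iff_imp]
  intro h
  refine ⟨?_, ?_, ?_⟩ <;> nlinarith

lemma expsOfDegree_zero (hb : 0 < b) : expsOfDegree b 0 = {(0, 0, 0)} := by
  ext ⟨m₁, m₂, m₃⟩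
  simp only [mem_expsOfDegree hb, mem_singleton, Prod.mk.injEq]
  constructor
  · intro h
    have : b * m₃ = 0 := by omega
    exact ⟨by omega, by omega, by simpa [hb.ne'] using this⟩
  · rintro ⟨rfl, rfl, rfl⟩
    simp

def reduceExp3 (q : ℕ) : ℕ × ℕ × ℕ → ℕ × ℕ × ℕ :=
  Prod.map (reduceExp q) (Prod.map (reduceExp q) (reduceExp q))

@[simp]
lemma reduceExp3_apply (m : ℕ × ℕ × ℕ) :
    reduceExp3 q m = (reduceExp q m.1, reduceExp q m.2.1, reduceExp q m.2.2) := rfl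

def reducedExps (q b d : ℕ) : Finset (ℕ × ℕ × ℕ) := (expsOfDegree b d).image (reduceExp3 q)

lemma exists_weight_eq_reduceExp3_add_mul (m : ℕ × ℕ × ℕ) :
    ∃ t, m.1 + m.2.1 + b * m.2.2 =
      (reduceExp3 q m).1 + (reduceExp3 q m).2.1 + b * (reduceExp3 q m).2.2 + (q - 1) * t := by
  obtain ⟨t₁, h₁⟩ := exists_eq_reduceExp_add_mul (q := q) m.1
  obtain ⟨t₂, h₂⟩ := exists_eq_reduceExp_add_mul (q := q) m.2.1
  obtain ⟨t₃, h₃⟩ := exists_eq_reduceExp_add_mul (q := q) m.2.2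
  refine ⟨t₁ + t₂ + b * t₃, ?_⟩
  conv_lhs => rw [h₁, h₂, h₃]
  simp only [reduceExp3_apply]
  ring

lemma mem_reducedExps_of_ne_zero (hq : 1 < q) (hb : 0 < b) {a : ℕ × ℕ × ℕ}
    (ha : a.1 + a.2.1 ≠ 0) :
    a ∈ reducedExps q b d ↔ (a.1 < q ∧ a.2.1 < q ∧ a.2.2 < q) ∧
      a.1 + a.2.1 + b * a.2.2 ≤ d ∧ (q - 1) ∣ d - (a.1 + a.2.1 + b * a.2.2) := by
  constructor
  · intro hmem
    obtain ⟨m, hm, rfl⟩ := mem_image.mp hmem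
    obtain ⟨t, ht⟩ := exists_weight_eq_reduceExp3_add_mul (q := q) (b := b) m
    rw [mem_expsOfDegree hb] at hm
    have := reduceExp_le hq m.1
    have := reduceExp_le hq m.2.1
    have := reduceExp_le hq m.2.2
    simp only [reduceExp3_apply] at ht ⊢
    exact ⟨⟨by omega, by omega, by omega⟩, by omega, ⟨t, by omega⟩⟩
  · obtain ⟨a₁, a₂, a₃⟩ := a
    rintro ⟨⟨h₁, h₂, h₃⟩, hle, t, ht⟩
    simp only at ha h₁ h₂ h₃ hle ht
    simp only [reducedExps, mem_image, mem_expsOfDegree hb, reduceExp3_apply, Prod.mk.injEq]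
    rcases Nat.eq_zero_or_pos a₁ with rfl | ha₁
    · refine ⟨(0, a₂ + (q - 1) * t, a₃), by simp only; omega, ?_⟩
      simp [reduceExp_add_mul (by omega : 0 < a₂), reduceExp_of_le (by omega : a₂ ≤ q - 1),
        reduceExp_of_le (by omega : a₃ ≤ q - 1)]
    · refine ⟨(a₁ + (q - 1) * t, a₂, a₃), by simp only; omega, ?_⟩
      simp [reduceExp_add_mul ha₁, reduceExp_of_le (by omega : a₁ ≤ q - 1),
        reduceExp_of_le (by omega : a₂ ≤ q - 1), reduceExp_of_le (by omega : a₃ ≤ q - 1)]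

lemma filter_expsOfDegree_eq_zero (hb : 0 < b) :
    (expsOfDegree b d).filter (fun m => m.1 + m.2.1 = 0) =
      if b ∣ d then {(0, 0, d / b)} else ∅ := by
  ext ⟨m₁, m₂, m₃⟩
  simp only [mem_filter, mem_expsOfDegree hb]
  split_ifs with h
  · obtain ⟨c, rfl⟩ := h
    simp only [Nat.mul_div_cancel_left c hb, mem_singleton, Prod.mk.injEq]
    constructor
    · rintro ⟨h, h₀⟩
      exact ⟨by omega, by omega, Nat.eq_of_mul_eq_mul_left hb (by omega)⟩
    · rintro ⟨rfl, rfl, rfl⟩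
      simp
  · simp only [notMem_empty, iff_false, not_and]
    exact fun hd h₀ => h ⟨m₃, by omega⟩

lemma card_filter_reducedExps_eq_zero (hb : 0 < b) :
    ((reducedExps q b d).filter fun a => a.1 + a.2.1 = 0).card = if b ∣ d then 1 else 0 := by
  have hzero :
      (expsOfDegree b d).filter (fun m => (reduceExp3 q m).1 + (reduceExp3 q m).2.1 = 0) =
        (expsOfDegree b d).filter (fun m => m.1 + m.2.1 = 0) :=
    filter_congr fun m _ => by simp
  rw [reducedExps, filter_image, hzero, filter_expsOfDegree_eq_zero hb]
  split_ifs <;> simp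

end Exponents

section Counting

variable {q b d : ℕ}

def sumPairs (q s : ℕ) : Finset (ℕ × ℕ) := (range q ×ˢ range q).filter fun p => p.1 + p.2 = s

lemma card_sumPairs (hq : 0 < q) (s : ℕ) :
    (sumPairs q s).card = min s (q - 1) + 1 - (s - (q - 1)) := by
  rw [← Nat.card_Icc]
  refine card_nbij' Prod.fst (fun x => (x, s - x)) ?_ ?_ ?_ ?_ <;>
    intro p hp <;> simp only [sumPairs, coe_filter, mem_product, mem_range, coe_Icc,
      Set.mem_ofPred_eq, Set.mem_Icc, le_min_iff] at hp ⊢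
  · omega
  · omega
  · exact Prod.ext rfl (by dsimp only; omega)

def congrPairs (q e : ℕ) : Finset (ℕ × ℕ) :=
  (range q ×ˢ range q).filter fun p =>
    p.1 + p.2 ≠ 0 ∧ p.1 + p.2 ≤ e ∧ (q - 1) ∣ e - (p.1 + p.2)

lemma congrPairs_eq_sumPairs {e : ℕ} (he₀ : e ≠ 0) (he : e ≤ q - 1) :
    congrPairs q e = sumPairs q e := by
  ext p
  simp only [congrPairs, sumPairs, mem_filter, and_congr_right_iff]
  intro _
  constructor
  · rintro ⟨hs₀, hse, hdvd⟩
    have := Nat.eq_zero_of_dvd_of_lt hdvd (by omega)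
    omega
  · rintro rfl
    exact ⟨he₀, le_rfl, by simp⟩

lemma congrPairs_eq_sumPairs_union (hq : 1 < q) {e : ℕ} (he : q ≤ e) :
    congrPairs q e = sumPairs q (reduceExp q e) ∪ sumPairs q (reduceExp q e + (q - 1)) := by
  obtain ⟨t, ht⟩ := exists_eq_reduceExp_add_mul (q := q) e
  have hρ := reduceExp_le hq e
  have hρ₀ : reduceExp q e ≠ 0 := reduceExp_eq_zero_iff.not.mpr (by omega)
  have ht₀ : t ≠ 0 := by rintro rfl; omega
  have hle : (q - 1) * 1 ≤ (q - 1) * t := Nat.mul_le_mul_left _ (by omega)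
  ext p
  simp only [congrPairs, sumPairs, mem_union, mem_filter, mem_product, mem_range]
  constructor
  · rintro ⟨hp, hs₀, hse, hdvd⟩
    rw [reduceExp_eq_of_dvd_sub hs₀ hse hdvd]
    have := eq_reduceExp_or_eq_reduceExp_add (q := q) hs₀ (by omega)
    tauto
  · rintro (⟨hp, hs⟩ | ⟨hp, hs⟩) <;> refine ⟨hp, by omega, by omega, ?_⟩
    · exact ⟨t, by omega⟩
    · exact ⟨t - 1, by rw [Nat.mul_sub_one]; omega⟩

lemma card_congrPairs (hq : 1 < q) (e : ℕ) :
    (congrPairs q e).card = if e = 0 then 0 else min (e + 1) (q + 1) := by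
  rcases Nat.eq_zero_or_pos e with rfl | he
  · simp [congrPairs]
  rw [if_neg he.ne']
  rcases le_or_gt e (q - 1) with hle | hgt
  · rw [congrPairs_eq_sumPairs he.ne' hle, card_sumPairs (by omega)]
    omega
  · have hdisj : Disjoint (sumPairs q (reduceExp q e)) (sumPairs q (reduceExp q e + (q - 1))) :=
      disjoint_filter.mpr fun _ _ h => by omega
    have := reduceExp_le hq e
    rw [congrPairs_eq_sumPairs_union hq (by omega), card_union_of_disjoint hdisj,
      card_sumPairs (by omega), card_sumPairs (by omega)]
    omega

lemma mk_mem_reducedExps_iff_mem_congrPairs (hq : 1 < q) (hb : 0 < b) {p : ℕ × ℕ} {j : ℕ}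
    (hj : j < q) : (p.1, p.2, j) ∈ reducedExps q b d ∧ p.1 + p.2 ≠ 0 ↔
      p ∈ congrPairs q (d - b * j) := by
  by_cases hp : p.1 + p.2 = 0
  · exact iff_of_false (fun h => h.2 hp) fun h => (mem_filter.mp h).2.1 hp
  rw [mem_reducedExps_of_ne_zero hq hb hp]
  simp only [congrPairs, mem_filter, mem_product, mem_range, Nat.sub_sub, Nat.add_comm (b * j)]
  constructor
  · rintro ⟨⟨⟨h₁, h₂, -⟩, hle, hdvd⟩, -⟩
    exact ⟨⟨h₁, h₂⟩, hp, by omega, hdvd⟩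
  · rintro ⟨⟨h₁, h₂⟩, -, hle, hdvd⟩
    exact ⟨⟨⟨h₁, h₂, hj⟩, by omega, hdvd⟩, hp⟩

lemma card_filter_reducedExps_ne_zero (hq : 1 < q) (hb : 0 < b) :
    ((reducedExps q b d).filter fun a => a.1 + a.2.1 ≠ 0).card =
      ∑ j ∈ range q, (congrPairs q (d - b * j)).card := by
  rw [card_eq_sum_card_fiberwise (f := fun a => a.2.2) (t := range q) fun a ha => by
    rw [coe_filter, Set.mem_ofPred_eq, mem_reducedExps_of_ne_zero hq hb ha.2] at ha
    exact mem_range.mpr ha.1.1.2.2]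
  refine sum_congr rfl fun j hj => card_nbij' (fun a => (a.1, a.2.1)) (fun p => (p.1, p.2, j))
    (fun a ha => ?_) (fun p hp => ?_) (fun a ha => ?_) (fun p _ => rfl)
  · obtain ⟨hmem, rfl⟩ := mem_filter.mp ha
    exact (mk_mem_reducedExps_iff_mem_congrPairs hq hb (mem_range.mp hj)).mp (mem_filter.mp hmem)
  · exact mem_filter.mpr ⟨mem_filter.mpr
      ((mk_mem_reducedExps_iff_mem_congrPairs hq hb (mem_range.mp hj)).mpr hp), rfl⟩
  · obtain ⟨-, rfl⟩ := mem_filter.mp ha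
    rfl

lemma card_reducedExps (hq : 1 < q) (hb : 0 < b) :
    (reducedExps q b d).card =
      (if b ∣ d then 1 else 0) + ∑ j ∈ range q, (congrPairs q (d - b * j)).card := by
  rw [← card_filter_add_card_filter_not (fun a => a.1 + a.2.1 = 0),
    card_filter_reducedExps_eq_zero hb, card_filter_reducedExps_ne_zero hq hb]

end Counting

universe u

section Evaluation

variable {K : Type u} [Field K] {σ : Type u}

lemma Submodule.finrank_map_add_finrank_inf_ker {V W : Type*} [AddCommGroup V] [Module K V]
    [AddCommGroup W] [Module K W] (f : V →ₗ[K] W) (P : Submodule K V) [FiniteDimensional K P] :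
    Module.finrank K (P.map f) + Module.finrank K ↥(P ⊓ LinearMap.ker f) =
      Module.finrank K P := by
  rw [← LinearMap.finrank_range_add_finrank_ker (f.domRestrict P), LinearMap.range_domRestrict,
    LinearMap.ker_domRestrict, ← (Submodule.comapSubtypeEquivOfLe inf_le_left).finrank_eq,
    Submodule.comap_inf, Submodule.comap_subtype_self, top_inf_eq]

lemma pow_reduceExp [Fintype K] (t : K) (m : ℕ) : t ^ reduceExp (Fintype.card K) m = t ^ m := by
  obtain ⟨j, hj⟩ := exists_eq_reduceExp_add_mul (q := Fintype.card K) m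
  rcases eq_or_ne t 0 with rfl | ht
  · rcases Nat.eq_zero_or_pos m with rfl | hm
    · simp
    · rw [zero_pow (by simpa using hm.ne'), zero_pow hm.ne']
  · conv_rhs =>
      rw [hj, pow_add, pow_mul, FiniteField.pow_card_sub_one_eq_one t ht, one_pow, mul_one]

variable (K σ) in
def evalNonzero : MvPolynomial σ K →ₗ[K] ({y : σ → K // y ≠ 0} → K) :=
  (LinearMap.funLeft K K Subtype.val).comp (evalₗ K σ)

lemma evalNonzero_apply (p : MvPolynomial σ K) (y : {y : σ → K // y ≠ 0}) :
    evalNonzero K σ p y = eval y.1 p := rfl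

lemma eval_monomial_mapRange_reduceExp [Fintype K] (y : σ → K) (s : σ →₀ ℕ) :
    eval y (monomial (s.mapRange (reduceExp (Fintype.card K)) reduceExp_zero) 1) =
      eval y (monomial s 1) := by
  simp only [eval_monomial, one_mul]
  rw [Finsupp.prod_mapRange_index (fun _ => pow_zero _)]
  simp only [pow_reduceExp]

lemma eq_zero_of_evalNonzero_eq_zero [Fintype K] [Finite σ] {p : MvPolynomial σ K}
    (hp : p ∈ restrictSupport K {s | (∀ i, s i ≤ Fintype.card K - 1) ∧ s ≠ 0})
    (h : evalNonzero K σ p = 0) : p = 0 := by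
  refine eq_zero_of_eval_eq_zero σ K p (fun y => ?_)
    (restrictSupport_mono K (fun s hs => hs.1) hp)
  rcases eq_or_ne y 0 with rfl | hy
  · rw [eval_zero, constantCoeff_eq, ← notMem_support_iff]
    exact fun h0 => (hp h0).2 rfl
  · exact congrFun h ⟨y, hy⟩

lemma linearIndepOn_evalNonzero_monomial [Fintype K] [Finite σ] :
    LinearIndepOn K (fun s => evalNonzero K σ (monomial s 1))
      {s | (∀ i, s i ≤ Fintype.card K - 1) ∧ s ≠ 0} := by
  have hmon := (basisMonomials σ K).linearIndependent.linearIndepOn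
    {s : σ →₀ ℕ | (∀ i, s i ≤ Fintype.card K - 1) ∧ s ≠ 0}
  rw [coe_basisMonomials] at hmon
  refine hmon.map_injOn _ ?_
  rw [← restrictSupport_eq_span]
  exact LinearMap.injOn_of_disjoint_ker le_rfl
    (Submodule.disjoint_def.mpr fun p hp hker => eq_zero_of_evalNonzero_eq_zero hp hker)

lemma finrank_map_evalNonzero_span_monomial [Fintype K] [Finite σ] [DecidableEq σ]
    (E : Finset (σ →₀ ℕ)) (hE : 0 ∉ E) :
    Module.finrank K ((Submodule.span K ((monomial · (1 : K)) '' ↑E)).map (evalNonzero K σ)) =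
      (E.image (Finsupp.mapRange (reduceExp (Fintype.card K)) reduceExp_zero)).card := by
  set R := E.image (Finsupp.mapRange (reduceExp (Fintype.card K)) reduceExp_zero)
  set v := fun s => evalNonzero K σ (monomial s (1 : K))
  classical
  have hR : (R : Set (σ →₀ ℕ)) ⊆ {s | (∀ i, s i ≤ Fintype.card K - 1) ∧ s ≠ 0} := by
    simp only [R, coe_image, Set.image_subset_iff]
    intro s hs
    refine ⟨fun i => reduceExp_le Fintype.one_lt_card _, fun h0 => hE ?_⟩
    obtain rfl : s = 0 := by ext i; simpa using DFunLike.congr_fun h0 i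
    exact hs
  have hind : LinearIndepOn K v R := linearIndepOn_evalNonzero_monomial.mono hR
  have hspan : (Submodule.span K ((monomial · (1 : K)) '' ↑E)).map (evalNonzero K σ) =
      Submodule.span K ↑(R.image v) := by
    rw [Submodule.map_span, Set.image_image, coe_image, coe_image, Set.image_image]
    congr 1
    refine Set.image_congr fun s _ => funext fun y => ?_
    simp only [v, evalNonzero_apply, eval_monomial_mapRange_reduceExp]
  rw [hspan, finrank_span_finset_eq_card (by rw [coe_image]; exact hind.id_image),
    card_image_of_injOn hind.injOn]

end Evaluation

section FinThree

variable (K : Type) [Field K]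

lemma ker_evalNonzero : LinearMap.ker (evalNonzero K (Fin 3)) = vanishing K := by
  ext p
  simp only [LinearMap.mem_ker, funext_iff, evalNonzero_apply, Pi.zero_apply, Subtype.forall]
  rfl

lemma finiteDimensional_Sd {b : ℕ} (hb : 0 < b) (d : ℕ) : FiniteDimensional K (Sd K b d) :=
  Module.Finite.iff_fg.mpr <| weightedHomogeneousSubmodule_fg K ![1, 1, b] (by
    intro i; fin_cases i <;> simp [hb.ne']) d

lemma HY_eq_finrank_map {b : ℕ} (hb : 0 < b) (d : ℕ) :
    HY K b d = Module.finrank K ((Sd K b d).map (evalNonzero K (Fin 3))) := by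
  have := finiteDimensional_Sd K hb d
  rw [HY, Id', ← ker_evalNonzero,
    ← Submodule.finrank_map_add_finrank_inf_ker (evalNonzero K (Fin 3))]
  omega

def finsuppFinThreeEquiv : (Fin 3 →₀ ℕ) ≃ ℕ × ℕ × ℕ where
  toFun s := (s 0, s 1, s 2)
  invFun m := Finsupp.equivFunOnFinite.symm ![m.1, m.2.1, m.2.2]
  left_inv s := by ext i; fin_cases i <;> rfl
  right_inv m := rfl

@[simp]
lemma finsuppFinThreeEquiv_apply (s : Fin 3 →₀ ℕ) :
    finsuppFinThreeEquiv s = (s 0, s 1, s 2) := rfl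

lemma weight_eq_finsuppFinThreeEquiv (b : ℕ) (s : Fin 3 →₀ ℕ) :
    Finsupp.weight ![1, 1, b] s = (finsuppFinThreeEquiv s).1 + (finsuppFinThreeEquiv s).2.1 +
      b * (finsuppFinThreeEquiv s).2.2 := by
  rw [Finsupp.weight_apply, Finsupp.sum_fintype _ _ (by simp), Fin.sum_univ_three]
  simp [mul_comm b]

lemma Sd_eq_span_monomial {b : ℕ} (hb : 0 < b) (d : ℕ) :
    Sd K b d = Submodule.span K ((monomial · (1 : K)) ''
      ↑((expsOfDegree b d).map finsuppFinThreeEquiv.symm.toEmbedding)) := by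
  rw [Sd, weightedHomogeneousSubmodule_eq_finsupp_supported, ← restrictSupport_eq_span]
  congr 1
  ext s
  simp [mem_expsOfDegree hb, weight_eq_finsuppFinThreeEquiv]

lemma HY_zero {b : ℕ} (hb : 0 < b) : HY K b 0 = 1 := by
  rw [HY_eq_finrank_map K hb, Sd_eq_span_monomial K hb, expsOfDegree_zero hb, map_singleton,
    coe_singleton, Set.image_singleton, Submodule.map_span, Set.image_singleton,
    finrank_span_singleton]
  intro h
  simpa [evalNonzero_apply, eval_monomial] using congrFun h ⟨1, one_ne_zero⟩

end FinThree

section Arithmetic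

variable {q b d d₀ r₀ : ℕ}

lemma two_mul_sum_range_sub_mul (c β : ℤ) (n : ℕ) :
    2 * ∑ j ∈ range n, (c - β * j) = 2 * n * c - β * (n * (n - 1)) := by
  induction n with
  | zero => simp
  | succ n ih =>
    rw [sum_range_succ, mul_add, ih]
    push_cast
    ring

lemma two_mul_sum_Ico_sub_mul (c β : ℤ) {m n : ℕ} (hmn : m ≤ n) :
    2 * ∑ j ∈ Ico m n, (c - β * j) =
      2 * (n - m) * c - β * (n * (n - 1) - m * (m - 1)) := by
  rw [sum_Ico_eq_sub _ hmn, mul_sub, two_mul_sum_range_sub_mul, two_mul_sum_range_sub_mul]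
  ring

lemma sum_range_min_of_le (hdq : d ≤ q) (n : ℕ) :
    ∑ j ∈ range n, min ((d : ℤ) - b * j + 1) (q + 1) =
      ∑ j ∈ range n, ((d : ℤ) + 1 - b * j) := by
  refine sum_congr rfl fun j _ => ?_
  have : (0 : ℤ) ≤ b * j := by positivity
  rw [min_eq_left (by omega)]
  ring

lemma sum_range_min_of_le_succ {k r : ℕ} (hdk : d = q + k * b + r) {n : ℕ}
    (hnk : n ≤ k + 1) :
    ∑ j ∈ range n, min ((d : ℤ) - b * j + 1) (q + 1) = n * (q + 1) := by
  rw [sum_congr rfl fun j hj => min_eq_right ?_, sum_const, card_range, nsmul_eq_mul]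
  have : (b : ℤ) * j ≤ b * k := by
    have := mem_range.mp hj
    exact mul_le_mul_of_nonneg_left (by omega) (by positivity)
  push_cast [hdk]
  linarith

lemma sum_range_min_eq_add_sum_Ico {k r : ℕ} (hdk : d = q + k * b + r) (hr : r < b) {n : ℕ}
    (hkn : k < n) :
    ∑ j ∈ range n, min ((d : ℤ) - b * j + 1) (q + 1) =
      (k + 1) * (q + 1) + ∑ j ∈ Ico (k + 1) n, ((d : ℤ) + 1 - b * j) := by
  rw [← sum_range_add_sum_Ico _ hkn, sum_range_min_of_le_succ hdk le_rfl]
  push_cast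
  congr 1
  refine sum_congr rfl fun j hj => ?_
  have : (b : ℤ) * (k + 1) ≤ b * j := by
    have := (mem_Ico.mp hj).1
    exact mul_le_mul_of_nonneg_left (by omega) (by positivity)
  rw [min_eq_left (by push_cast [hdk]; linarith)]
  ring

-- The count of `card_reducedExps`: the term `b ∣ d` counts the exponents `(0, 0, a₃)`, the
-- summand `j` the pairs `(a₁, a₂) ≠ 0` over `a₃ = j` (given by `card_congrPairs`).
def hilbertSum (q b d : ℕ) : ℤ :=
  (if b ∣ d then 1 else 0) +
    ∑ j ∈ range q, if b * j < d then min ((d : ℤ) - b * j + 1) (q + 1) else 0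

lemma mul_lt_iff_of_eq_mul_add (hd : d = d₀ * b + r₀) (hr₀ : r₀ < b) {j : ℕ} :
    b * j < d ↔ j < d₀ ∨ j = d₀ ∧ r₀ ≠ 0 := by
  subst hd
  constructor
  · intro h
    rcases lt_trichotomy j d₀ with hj | rfl | hj
    · exact Or.inl hj
    · refine Or.inr ⟨rfl, fun hr => ?_⟩
      rw [hr, mul_comm] at h
      omega
    · have : b * (d₀ + 1) ≤ b * j := Nat.mul_le_mul_left _ hj
      nlinarith
  · rintro (hj | ⟨rfl, hr⟩)
    · have : b * (j + 1) ≤ b * d₀ := Nat.mul_le_mul_left _ hj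
      nlinarith
    · rw [mul_comm]; omega

lemma dvd_iff_eq_zero_of_eq_mul_add (hd : d = d₀ * b + r₀) (hr₀ : r₀ < b) :
    b ∣ d ↔ r₀ = 0 := by
  rw [hd, Nat.dvd_add_right (dvd_mul_left b d₀)]
  exact ⟨fun h => Nat.eq_zero_of_dvd_of_lt h hr₀, fun h => h ▸ dvd_zero b⟩

lemma hilbertSum_of_le_mul (hb : 0 < b) (hd : d = d₀ * b + r₀) (hr₀ : r₀ < b)
    (hdq : d ≤ q * b) :
    hilbertSum q b d = ∑ j ∈ range (d₀ + 1), min ((d : ℤ) - b * j + 1) (q + 1) := by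
  have hd₀ : d₀ ≤ q := Nat.le_of_mul_le_mul_right (by omega) hb
  have hd₀' : r₀ ≠ 0 → d₀ < q := fun hr => Nat.lt_of_mul_lt_mul_right (a := b) (by omega)
  have hfilter :
      (range q).filter (fun j => b * j < d) = range (if r₀ = 0 then d₀ else d₀ + 1) := by
    ext j
    simp only [mem_filter, mem_range, mul_lt_iff_of_eq_mul_add hd hr₀]
    split_ifs <;> omega
  have hdvd := dvd_iff_eq_zero_of_eq_mul_add hd hr₀
  rw [hilbertSum, ← sum_filter, hfilter]
  by_cases hr : r₀ = 0
  · rw [if_pos (hdvd.mpr hr), if_pos hr, sum_range_succ, add_comm, hd, hr]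
    push_cast
    rw [mul_comm (d₀ : ℤ), add_zero, sub_self, zero_add, min_eq_left (by omega)]
  · rw [if_neg (mt hdvd.mp hr), if_neg hr, zero_add]

lemma hilbertSum_of_mul_lt (hqd : q * b < d) :
    hilbertSum q b d =
      (if b ∣ d then 1 else 0) + ∑ j ∈ range q, min ((d : ℤ) - b * j + 1) (q + 1) := by
  refine congrArg _ (sum_congr rfl fun j hj => if_pos ?_)
  have : b * j ≤ b * q := Nat.mul_le_mul_left _ (mem_range.mp hj).le
  rw [mul_comm q] at hqd
  omega

lemma hilbertSum_of_le (hb : 0 < b) (hd : d = d₀ * b + r₀) (hr₀ : r₀ < b) (hdq : d ≤ q) :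
    hilbertSum q b d =
      ((d₀ : ℤ) + 1) * ((d : ℤ) + 1) - (b : ℤ) * ((d₀ : ℤ) * ((d₀ : ℤ) + 1) / 2) := by
  have hdqb : d ≤ q * b := hdq.trans (Nat.le_mul_of_pos_right q hb)
  have hsum := two_mul_sum_range_sub_mul ((d : ℤ) + 1) b (d₀ + 1)
  have hhalf := Int.ediv_mul_cancel (Int.even_mul_succ_self (d₀ : ℤ)).two_dvd
  rw [hilbertSum_of_le_mul hb hd hr₀ hdqb, sum_range_min_of_le hdq]
  push_cast at hsum
  refine mul_left_cancel₀ (two_ne_zero (α := ℤ)) ?_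
  linear_combination hsum + (b : ℤ) * hhalf

lemma hilbertSum_of_lt_of_le_mul (hb : 0 < b) (hd : d = d₀ * b + r₀) (hr₀ : r₀ < b) {k r : ℕ}
    (hdk : d = q + k * b + r) (hr : r < b) (hdq : d ≤ q * b) :
    hilbertSum q b d = ((k : ℤ) + 1) * ((q : ℤ) + 1) + ((d₀ : ℤ) - (k : ℤ)) * ((d : ℤ) + 1)
        - (b : ℤ) * (((d₀ : ℤ) * ((d₀ : ℤ) + 1) - (k : ℤ) * ((k : ℤ) + 1)) / 2) := by
  have hkd₀ : k ≤ d₀ := Nat.le_of_lt_succ (Nat.lt_of_mul_lt_mul_right (a := b) (by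
    rw [Nat.succ_mul]; omega))
  have hsum := two_mul_sum_Ico_sub_mul ((d : ℤ) + 1) b (by omega : k + 1 ≤ d₀ + 1)
  have hhalf := Int.ediv_mul_cancel
    ((Int.even_mul_succ_self (d₀ : ℤ)).sub (Int.even_mul_succ_self (k : ℤ))).two_dvd
  rw [hilbertSum_of_le_mul hb hd hr₀ hdq, sum_range_min_eq_add_sum_Ico hdk hr (by omega)]
  push_cast at hsum
  refine mul_left_cancel₀ (two_ne_zero (α := ℤ)) ?_
  linear_combination hsum + (b : ℤ) * hhalf

lemma hilbertSum_of_mul_lt_of_lt (hd : d = d₀ * b + r₀) (hr₀ : r₀ < b) {k r : ℕ}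
    (hdk : d = q + k * b + r) (hr : r < b) (hqd : q * b < d) (hkq : k < q) :
    hilbertSum q b d = (b : ℤ) * (((k : ℤ) + (q : ℤ)) * ((k : ℤ) - (q : ℤ) + 1) / 2)
        + (q : ℤ) * ((k : ℤ) + (d : ℤ) + 1) - (d : ℤ) * (k : ℤ) - (b : ℤ) * (d₀ : ℤ)
        + (if r₀ = 0 then (q : ℤ) + 1 else (q : ℤ) - (r₀ : ℤ)) := by
  have hsum := two_mul_sum_Ico_sub_mul ((d : ℤ) + 1) b (by omega : k + 1 ≤ q)
  have heven : Even (((k : ℤ) + q) * ((k : ℤ) - q + 1)) := by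
    rw [show ((k : ℤ) + q) * ((k : ℤ) - q + 1) =
      ((k : ℤ) + q) * ((k : ℤ) + q + 1) - 2 * (q * (k + q)) by ring]
    exact (Int.even_mul_succ_self _).sub (even_two_mul _)
  have hhalf := Int.ediv_mul_cancel heven.two_dvd
  have hdZ : (d : ℤ) = d₀ * b + r₀ := by exact_mod_cast hd
  rw [hilbertSum_of_mul_lt hqd, sum_range_min_eq_add_sum_Ico hdk hr hkq]
  simp only [dvd_iff_eq_zero_of_eq_mul_add hd hr₀]
  push_cast at hsum
  refine mul_left_cancel₀ (two_ne_zero (α := ℤ)) ?_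
  split_ifs with h₀
  · subst h₀
    linear_combination hsum - (b : ℤ) * hhalf - 2 * hdZ
  · linear_combination hsum - (b : ℤ) * hhalf - 2 * hdZ

lemma hilbertSum_of_mul_lt_of_le (hd : d = d₀ * b + r₀) (hr₀ : r₀ < b) {k r : ℕ}
    (hdk : d = q + k * b + r) (hqd : q * b < d) (hqk : q ≤ k) :
    hilbertSum q b d =
      (q : ℤ) ^ 2 + (r₀ : ℤ) + (if r₀ = 0 then (q : ℤ) + 1 else (q : ℤ) - (r₀ : ℤ)) := by
  rw [hilbertSum_of_mul_lt hqd, sum_range_min_of_le_succ hdk (by omega)]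
  simp only [dvd_iff_eq_zero_of_eq_mul_add hd hr₀]
  split_ifs with h₀
  · subst h₀; ring
  · ring

end Arithmetic

lemma HY_eq_card_reducedExps {b d : ℕ} (hb : 0 < b) (hd : 0 < d) :
    HY F b d = (reducedExps (Fintype.card F) b d).card := by
  have h0 : 0 ∉ (expsOfDegree b d).map finsuppFinThreeEquiv.symm.toEmbedding := by
    simp [mem_expsOfDegree hb, hd.ne]
  have hcomm : Finsupp.mapRange (reduceExp (Fintype.card F)) reduceExp_zero ∘
      finsuppFinThreeEquiv.symm = finsuppFinThreeEquiv.symm ∘ reduceExp3 (Fintype.card F) := by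
    funext m; ext i; fin_cases i <;> rfl
  rw [HY_eq_finrank_map F hb, Sd_eq_span_monomial F hb,
    finrank_map_evalNonzero_span_monomial _ h0, map_eq_image, image_image,
    Equiv.coe_toEmbedding, hcomm, ← image_image,
    card_image_of_injective _ finsuppFinThreeEquiv.symm.injective, reducedExps]

lemma HY_eq_hilbertSum {b : ℕ} (hb : 0 < b) (d : ℕ) :
    (HY F b d : ℤ) = hilbertSum (Fintype.card F) b d := by
  rcases Nat.eq_zero_or_pos d with rfl | hd
  · simp [HY_zero F hb, hilbertSum]
  rw [HY_eq_card_reducedExps F hb hd, card_reducedExps Fintype.one_lt_card hb, hilbertSum]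
  push_cast
  refine congrArg _ (sum_congr rfl fun j _ => ?_)
  rw [card_congrPairs Fintype.one_lt_card]
  split_ifs <;> omega

/-- Theorem (Hilbert function of `ℙ(1,1,b)(F_q)` when `q > b`): writing `d = d₀b + r₀`
with `0 ≤ r₀ < b`, and `d = q + kb + r` with `0 ≤ r < b` when `d > q`, and with
`κ = q − r₀` if `0 < r₀ < b`, `κ = q + 1` if `r₀ = 0`, the five stated case formulas
hold. -/
theorem hilbert_function_P11b_of_q_gt_b (q : ℕ) (hq : q = Fintype.card F)
    (b : ℕ) (hb : 0 < b) (hbq : b < q) (d d₀ r₀ : ℕ)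
    (hd : d = d₀ * b + r₀) (hr₀ : r₀ < b) (κ : ℤ)
    (hκ : κ = if r₀ = 0 then (q : ℤ) + 1 else (q : ℤ) - (r₀ : ℤ)) :
    (d ≤ b - 1 → (HY F b d : ℤ) = (d : ℤ) + 1) ∧
    (b ≤ d → d ≤ q →
      (HY F b d : ℤ) = ((d₀ : ℤ) + 1) * ((d : ℤ) + 1)
        - (b : ℤ) * ((d₀ : ℤ) * ((d₀ : ℤ) + 1) / 2)) ∧
    (∀ k r : ℕ, d = q + k * b + r → r < b → q + 1 ≤ d → d ≤ q * b →
      (HY F b d : ℤ) = ((k : ℤ) + 1) * ((q : ℤ) + 1)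
        + ((d₀ : ℤ) - (k : ℤ)) * ((d : ℤ) + 1)
        - (b : ℤ) * (((d₀ : ℤ) * ((d₀ : ℤ) + 1) - (k : ℤ) * ((k : ℤ) + 1)) / 2)) ∧
    (∀ k r : ℕ, d = q + k * b + r → r < b → q * b < d → k < q →
      (HY F b d : ℤ) = (b : ℤ) * (((k : ℤ) + (q : ℤ)) * ((k : ℤ) - (q : ℤ) + 1) / 2)
        + (q : ℤ) * ((k : ℤ) + (d : ℤ) + 1) - (d : ℤ) * (k : ℤ) - (b : ℤ) * (d₀ : ℤ)
        + κ) ∧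
    (∀ k r : ℕ, d = q + k * b + r → r < b → q * b < d → q ≤ k →
      (HY F b d : ℤ) = (q : ℤ) ^ 2 + (r₀ : ℤ) + κ) := by
  rw [HY_eq_hilbertSum F hb, ← hq, hκ]
  refine ⟨fun hdb => ?_, fun _ hdq => hilbertSum_of_le hb hd hr₀ hdq,
    fun k r hdk hr _ hdq => hilbertSum_of_lt_of_le_mul hb hd hr₀ hdk hr hdq,
    fun k r hdk hr hqd hkq => hilbertSum_of_mul_lt_of_lt hd hr₀ hdk hr hqd hkq,
    fun k r hdk _ hqd hqk => hilbertSum_of_mul_lt_of_le hd hr₀ hdk hqd hqk⟩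
  obtain rfl : d₀ = 0 := by
    rcases d₀ with _ | d₀
    · rfl
    · rw [Nat.succ_mul] at hd; omega
  rw [hilbertSum_of_le hb hd hr₀ (by omega)]
  ring

end
end

section
/- Let q be a prime power, let b be a positive integer, and let H_Y be the Hilbert function of the set Y of F_q-rational points of P(1,1,b). Then for every natural number d, H_Y(d) = q² + q + 1 if and only if d = d₀b for some natural number d₀ with d₀ ≥ q + ⌊(q−1)/b⌋. In other words, the regularity set reg(Y) = {d ∈ ℕ : H_Y(d) = q² + q + 1} equals (q + ⌊(q−1)/b⌋)b + ℕb. -/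
/-!
Evaluation at one representative of each point of `Y` has kernel `I_d`, because weighted
homogeneity propagates vanishing at the representatives to all of `F³`; so `H_Y(d) = |Y|` iff
this evaluation map `S_d → F^Y` is onto. Put `n = q - 1`. If `d = d₀ b > n (b + 1)`, products
`X₀ ^ s * (X₀ ^ n - (X₁ - a X₀) ^ n) * (X₀ ^ (n b) - (X₂ - c X₀ ^ b) ^ n)` (and their analogues
for `x₀ = 0`) of degree `s + n (b + 1)`, `s ≥ 1`, are indicator functions of all points but
`[0 : 0 : 1]`, and `X₂ ^ d₀` supplies that one. Otherwise a nonzero linear form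
`f ↦ ∑_P λ_P f(P)` kills every monomial of degree `d`, as the power sums
`∑_{x ∈ F} x ^ k = -[k ≠ 0 ∧ n ∣ k]` show: the value at `[0 : 0 : 1]` if `b ∤ d`, the sum over
the points `[0 : 1 : c]` (corrected at `[0 : 0 : 1]`) if `d₀ ≤ n`, and a form with weights `a ^ t`
on the points `[1 : a : c]` if `n < d₀ ≤ n + ⌊n / b⌋`.
-/

open MvPolynomial

noncomputable section

variable (F : Type) [Field F] [Fintype F]

theorem MvPolynomial.IsWeightedHomogeneous.eval_pow_mul {σ R : Type*} [CommSemiring R]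
    {w : σ → ℕ} {f : MvPolynomial σ R} {d : ℕ} (hf : IsWeightedHomogeneous w f d)
    (l : R) (y : σ → R) :
    eval (fun i => l ^ w i * y i) f = l ^ d * eval y f := by
  rw [eval_eq, eval_eq, Finset.mul_sum]
  refine Finset.sum_congr rfl fun m hm => ?_
  have hmd : ∑ i ∈ m.support, m i * w i = d := by
    rw [← hf (mem_support_iff.mp hm), Finsupp.weight_apply, Finsupp.sum]; rfl
  simp_rw [mul_pow, Finset.prod_mul_distrib, ← pow_mul, Finset.prod_pow_eq_pow_sum,
    mul_comm (w _), hmd]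
  ring

theorem FiniteField.sum_pow {K : Type*} [Field K] [Fintype K] (k : ℕ) :
    ∑ x : K, x ^ k = if k ≠ 0 ∧ Fintype.card K - 1 ∣ k then -1 else 0 := by
  classical
  rcases eq_or_ne k 0 with rfl | hk
  · simp
  have hzero : ∑ x : {x : K // ¬x ≠ 0}, (x : K) ^ k = 0 :=
    Finset.sum_eq_zero fun x _ => by rw [not_not.mp x.2, zero_pow hk]
  have hunits : ∑ x : K, x ^ k = ∑ x : Kˣ, (x : K) ^ k := by
    rw [← Fintype.sum_subtype_add_sum_subtype (· ≠ (0 : K)), hzero, add_zero]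
    exact (Fintype.sum_equiv unitsEquivNeZero _ _ fun _ => rfl).symm
  rw [hunits, FiniteField.sum_pow_units]
  simp [hk]

theorem FiniteField.card_sub_one_ne_zero (K : Type*) [Field K] [Fintype K] :
    Fintype.card K - 1 ≠ 0 := by
  have := Fintype.one_lt_card (α := K)
  omega

theorem FiniteField.one_sub_pow_card_sub_one {K : Type*} [Field K] [Fintype K] [DecidableEq K]
    (x : K) :
    1 - x ^ (Fintype.card K - 1) = if x = 0 then 1 else 0 := by
  split_ifs with hx
  · rw [hx, zero_pow (FiniteField.card_sub_one_ne_zero K), sub_zero]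
  · rw [FiniteField.pow_card_sub_one_eq_one x hx, sub_self]

theorem Submodule.eq_top_of_single_mem {ι K : Type*} [Fintype ι] [DecidableEq ι] [Field K]
    {p : Submodule K (ι → K)} (i₀ : ι) (hsingle : ∀ i ≠ i₀, Pi.single i 1 ∈ p)
    {v : ι → K} (hv : v ∈ p) (hvi₀ : v i₀ ≠ 0) : p = ⊤ := by
  have hmem : ∀ g : ι → K, g i₀ = 0 → g ∈ p := by
    intro g hg
    rw [← Finset.univ_sum_single g]
    refine Submodule.sum_mem _ fun i _ => ?_
    rcases eq_or_ne i i₀ with rfl | hi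
    · simp [hg]
    · simpa [← Pi.single_smul'] using p.smul_mem (g i) (hsingle i hi)
  refine eq_top_iff.mpr fun g _ => ?_
  have := p.add_mem (hmem (g - (g i₀ / v i₀) • v) (by simp [hvi₀])) (p.smul_mem (g i₀ / v i₀) hv)
  simpa using this

theorem Submodule.ne_top_of_dotProduct_eq_zero {ι K : Type*} [Fintype ι] [Field K]
    {p : Submodule K (ι → K)} {w : ι → K} (hw : w ≠ 0) (hp : ∀ v ∈ p, w ⬝ᵥ v = 0) : p ≠ ⊤ := by
  rintro rfl
  exact hw (dotProduct_eq_zero_iff.mp fun v => hp v trivial)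

theorem Nat.mul_add_self_lt_mul_iff {n b d : ℕ} (hb : 0 < b) :
    n * b + n < d * b ↔ n + n / b < d := by
  calc n * b + n < d * b ↔ n < (d - n) * b := by rw [Nat.sub_mul]; omega
    _ ↔ n / b < d - n := (Nat.div_lt_iff_lt_mul hb).symm
    _ ↔ n + n / b < d := by generalize n / b = k; omega

theorem Nat.eq_one_and_eq_two_mul_of_dvd {n b d : ℕ} (hb : 0 < b) (hn : n ≠ 0) (hdvd : n ∣ d)
    (hlt : n < d) (hle : d * b ≤ n * b + n) : b = 1 ∧ d = 2 * n := by
  obtain ⟨j, rfl⟩ := hdvd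
  have hj : 1 < j := by nlinarith
  have hjb : j * b ≤ b + 1 := Nat.le_of_mul_le_mul_left (by nlinarith) (Nat.pos_of_ne_zero hn)
  obtain rfl : b = 1 := by nlinarith
  exact ⟨rfl, by rw [show j = 2 by omega, mul_comm]⟩

section Indicator

variable {σ K : Type*} [Field K] [Fintype K]

/-- Where `P ≠ 0` this is the indicator function of `Q / P = a`, as `x ^ (q - 1) = 1` for
`x ≠ 0`. -/
def ratioIndicator (P Q : MvPolynomial σ K) (a : K) : MvPolynomial σ K :=
  P ^ (Fintype.card K - 1) - (Q - C a * P) ^ (Fintype.card K - 1)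

lemma isWeightedHomogeneous_ratioIndicator {w : σ → ℕ} {k : ℕ} {P Q : MvPolynomial σ K}
    (hP : IsWeightedHomogeneous w P k) (hQ : IsWeightedHomogeneous w Q k) (a : K) :
    IsWeightedHomogeneous w (ratioIndicator P Q a) ((Fintype.card K - 1) * k) :=
  (hP.pow _).sub ((hQ.sub (hP.C_mul a)).pow _)

lemma eval_ratioIndicator_of_eq_one [DecidableEq K] {P Q : MvPolynomial σ K} (a : K)
    {y : σ → K} (hP : eval y P = 1) :
    eval y (ratioIndicator P Q a) = if eval y Q = a then 1 else 0 := by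
  simp [ratioIndicator, hP, FiniteField.one_sub_pow_card_sub_one, sub_eq_zero]

end Indicator

namespace WeightedProjectivePlane

variable {F}

lemma weight_apply_one_one (b : ℕ) (m : Fin 3 →₀ ℕ) :
    Finsupp.weight ![1, 1, b] m = m 0 + m 1 + m 2 * b := by
  simp [Finsupp.weight_apply, Finsupp.sum_fintype, Fin.sum_univ_three]

omit [Fintype F] in
lemma mem_Sd_iff {b d : ℕ} {f : MvPolynomial (Fin 3) F} :
    f ∈ Sd F b d ↔ ∀ m : Fin 3 →₀ ℕ, coeff m f ≠ 0 → m 0 + m 1 + m 2 * b = d := by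
  simp only [Sd, mem_weightedHomogeneousSubmodule, IsWeightedHomogeneous, weight_apply_one_one]

omit [Fintype F] in
lemma finiteDimensional_Sd {b : ℕ} (hb : 0 < b) (d : ℕ) : FiniteDimensional F (Sd F b d) := by
  refine Module.Finite.iff_fg.mpr (weightedHomogeneousSubmodule_fg F _ (fun i => ?_) d)
  fin_cases i <;> simp [hb.ne']

/-- One representative of each `F`-point of `ℙ(1,1,b)`: `[1 : a : c]`, `[0 : 1 : c]`,
`[0 : 0 : 1]`. -/
abbrev Rep (F : Type) : Type := (F × F) ⊕ (F ⊕ Unit)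

def Rep.point : Rep F → Fin 3 → F
  | .inl (a, c) => ![1, a, c]
  | .inr (.inl c) => ![0, 1, c]
  | .inr (.inr _) => ![0, 0, 1]

omit [Fintype F] in
lemma Rep.point_ne_zero (r : Rep F) : r.point ≠ 0 := by
  rcases r with ⟨a, c⟩ | c | u <;> intro h
  · simpa [Rep.point] using congr_fun h 0
  · simpa [Rep.point] using congr_fun h 1
  · simpa [Rep.point] using congr_fun h 2

omit [Field F] in
lemma card_Rep : Fintype.card (Rep F) = Fintype.card F ^ 2 + Fintype.card F + 1 := by
  simp [Fintype.card_sum, Fintype.card_prod]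
  ring

def evalRep (b d : ℕ) : Sd F b d →ₗ[F] (Rep F → F) :=
  LinearMap.pi (fun r => (aeval r.point).toLinearMap) ∘ₗ (Sd F b d).subtype

omit [Fintype F] in
@[simp]
lemma evalRep_apply {b d : ℕ} (f : Sd F b d) (r : Rep F) :
    evalRep b d f r = eval r.point (f : MvPolynomial (Fin 3) F) := by
  simp [evalRep]

omit [Fintype F] in
lemma eval_zero_zero {b d : ℕ} (hb : 0 < b) {f : MvPolynomial (Fin 3) F} (hf : f ∈ Sd F b d)
    (z : F) : eval ![0, 0, z] f = z ^ (d / b) * eval ![0, 0, 1] f := by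
  rw [eval_eq', eval_eq', Finset.mul_sum]
  refine Finset.sum_congr rfl fun m hm => ?_
  have hmd := mem_Sd_iff.mp hf m (mem_support_iff.mp hm)
  simp only [Fin.prod_univ_three, Matrix.cons_val_zero, Matrix.cons_val_one,
    Matrix.cons_val_two, Matrix.head_cons, Matrix.tail_cons, one_pow, mul_one]
  rcases Nat.eq_zero_or_pos (m 0) with h0 | h0
  · rcases Nat.eq_zero_or_pos (m 1) with h1 | h1
    · have : d / b = m 2 := Nat.div_eq_of_eq_mul_left hb (by omega)
      simp [h0, h1, this, mul_comm]
    · simp [zero_pow h1.ne']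
  · simp [zero_pow h0.ne']

omit [Fintype F] in
lemma eval_eq_zero_of_forall_rep {b d : ℕ} (hb : 0 < b) {f : MvPolynomial (Fin 3) F}
    (hf : f ∈ Sd F b d) (h : ∀ r : Rep F, eval r.point f = 0) (y : Fin 3 → F) :
    eval y f = 0 := by
  have hhom : IsWeightedHomogeneous ![1, 1, b] f d := hf
  by_cases h0 : y 0 = 0
  · by_cases h1 : y 1 = 0
    · have hy' : y = ![0, 0, y 2] := by
        funext i; fin_cases i <;> simp [h0, h1]
      rw [hy', eval_zero_zero hb hf, show ![(0 : F), 0, 1] = Rep.point (.inr (.inr ())) from rfl,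
        h, mul_zero]
    · have hy' : y = fun i => y 1 ^ ![1, 1, b] i * Rep.point (.inr (.inl (y 2 / y 1 ^ b))) i := by
        funext i; fin_cases i <;> simp [Rep.point, h0, h1, mul_div_cancel₀]
      rw [hy', hhom.eval_pow_mul, h, mul_zero]
  · have hy' : y = fun i => y 0 ^ ![1, 1, b] i * Rep.point (.inl (y 1 / y 0, y 2 / y 0 ^ b)) i := by
      funext i; fin_cases i <;> simp [Rep.point, h0, mul_div_cancel₀]
    rw [hy', hhom.eval_pow_mul, h, mul_zero]

omit [Fintype F] in
lemma ker_evalRep {b d : ℕ} (hb : 0 < b) :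
    LinearMap.ker (evalRep (F := F) b d) = (Id' F b d).comap (Sd F b d).subtype := by
  ext f
  simp only [LinearMap.mem_ker, Submodule.mem_comap, Submodule.coe_subtype, Id',
    Submodule.mem_inf, f.2, true_and]
  refine ⟨fun hf y _ => eval_eq_zero_of_forall_rep hb f.2 (fun r => congr_fun hf r) y,
    fun hf => funext fun r => hf r.point r.point_ne_zero⟩

omit [Fintype F] in
lemma HY_eq_finrank_range {b : ℕ} (hb : 0 < b) (d : ℕ) :
    HY F b d = Module.finrank F (LinearMap.range (evalRep (F := F) b d)) := by
  have := finiteDimensional_Sd (F := F) hb d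
  have hker : Module.finrank F (LinearMap.ker (evalRep (F := F) b d))
      = Module.finrank F (Id' F b d) := by
    rw [ker_evalRep hb]
    exact (Submodule.comapSubtypeEquivOfLe inf_le_left).finrank_eq
  rw [HY, ← hker, ← LinearMap.finrank_range_add_finrank_ker (evalRep b d)]
  omega

lemma HY_eq_card_iff {b : ℕ} (hb : 0 < b) (d : ℕ) :
    HY F b d = Fintype.card F ^ 2 + Fintype.card F + 1 ↔
      LinearMap.range (evalRep (F := F) b d) = ⊤ := by
  rw [HY_eq_finrank_range hb, ← card_Rep, ← Module.finrank_fintype_fun_eq_card (R := F)]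
  exact ⟨Submodule.eq_top_of_finrank_eq, fun h => by rw [h, finrank_top]⟩

lemma single_inl_mem_range [DecidableEq F] {b d s : ℕ} (hs : s ≠ 0)
    (hd : d = s + (Fintype.card F - 1) * (b + 1)) (a c : F) :
    Pi.single (.inl (a, c)) 1 ∈ LinearMap.range (evalRep (F := F) b d) := by
  have hX := isWeightedHomogeneous_X F ![1, 1, b]
  have hXs : IsWeightedHomogeneous ![1, 1, b] (X 0 ^ s : MvPolynomial (Fin 3) F) s := by
    simpa using (hX 0).pow s
  have hXb : IsWeightedHomogeneous ![1, 1, b] (X 0 ^ b : MvPolynomial (Fin 3) F) b := by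
    simpa using (hX 0).pow b
  have hG : IsWeightedHomogeneous ![1, 1, b]
      (X 0 ^ s * ratioIndicator (X 0) (X 1) a * ratioIndicator (X 0 ^ b) (X 2) c) d := by
    convert (hXs.mul (isWeightedHomogeneous_ratioIndicator (hX 0) (hX 1) a)).mul
      (isWeightedHomogeneous_ratioIndicator hXb (hX 2) c) using 1
    simp [hd]
    ring
  refine ⟨⟨_, hG⟩, funext fun r => ?_⟩
  rcases r with ⟨a', c'⟩ | c' | u
  · by_cases ha : a' = a <;>
      simp [Rep.point, eval_ratioIndicator_of_eq_one, Pi.single_apply, ha]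
  · simp [Rep.point, hs]
  · simp [Rep.point, hs]

lemma single_inr_inl_mem_range [DecidableEq F] {b d s : ℕ} (hs : s ≠ 0)
    (hd : d = s + (Fintype.card F - 1) * (b + 1)) (c : F) :
    Pi.single (.inr (.inl c)) 1 ∈ LinearMap.range (evalRep (F := F) b d) := by
  have hX := isWeightedHomogeneous_X F ![1, 1, b]
  have hXs : IsWeightedHomogeneous ![1, 1, b] (X 1 ^ s : MvPolynomial (Fin 3) F) s := by
    simpa using (hX 1).pow s
  have hXb : IsWeightedHomogeneous ![1, 1, b] (X 1 ^ b : MvPolynomial (Fin 3) F) b := by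
    simpa using (hX 1).pow b
  have hG : IsWeightedHomogeneous ![1, 1, b]
      (X 1 ^ s * ratioIndicator (X 1) (X 0) 0 * ratioIndicator (X 1 ^ b) (X 2) c) d := by
    convert (hXs.mul (isWeightedHomogeneous_ratioIndicator (hX 1) (hX 0) 0)).mul
      (isWeightedHomogeneous_ratioIndicator hXb (hX 2) c) using 1
    simp [hd]
    ring
  refine ⟨⟨_, hG⟩, funext fun r => ?_⟩
  rcases r with ⟨a, c'⟩ | c' | u
  · have ha : a ^ s * (a ^ (Fintype.card F - 1) - 1) = 0 := by
      rcases eq_or_ne a 0 with rfl | ha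
      · rw [zero_pow hs, zero_mul]
      · rw [FiniteField.pow_card_sub_one_eq_one a ha, sub_self, mul_zero]
    simp [Rep.point, ratioIndicator, ha]
  · simp [Rep.point, eval_ratioIndicator_of_eq_one, Pi.single_apply]
  · simp [Rep.point, hs]

lemma range_evalRep_eq_top {b d₀ : ℕ}
    (h : (Fintype.card F - 1) * b + (Fintype.card F - 1) < d₀ * b) :
    LinearMap.range (evalRep (F := F) b (d₀ * b)) = ⊤ := by
  classical
  obtain ⟨s, hs, hd⟩ : ∃ s, s ≠ 0 ∧ d₀ * b = s + (Fintype.card F - 1) * (b + 1) :=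
    ⟨d₀ * b - (Fintype.card F - 1) * (b + 1), by rw [mul_add_one]; omega,
      by rw [mul_add_one]; omega⟩
  have hX2 : IsWeightedHomogeneous ![1, 1, b] (X 2 ^ d₀ : MvPolynomial (Fin 3) F) (d₀ * b) := by
    simpa using (isWeightedHomogeneous_X F ![1, 1, b] 2).pow d₀
  refine Submodule.eq_top_of_single_mem (.inr (.inr ())) (fun r hr => ?_)
    (LinearMap.mem_range_self (evalRep b _) ⟨_, hX2⟩) (by simp [Rep.point])
  rcases r with ⟨a, c⟩ | c | u
  · exact single_inl_mem_range hs hd a c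
  · exact single_inr_inl_mem_range hs hd c
  · exact absurd rfl hr

lemma range_evalRep_ne_top_of_dotProduct {b d : ℕ} {w : Rep F → F} (hw : w ≠ 0)
    (hmono : ∀ m : Fin 3 →₀ ℕ, m 0 + m 1 + m 2 * b = d →
      w ⬝ᵥ (fun r => eval r.point (monomial m (1 : F))) = 0) :
    LinearMap.range (evalRep (F := F) b d) ≠ ⊤ := by
  refine Submodule.ne_top_of_dotProduct_eq_zero hw ?_
  rintro _ ⟨⟨f, hf⟩, rfl⟩
  have hexpand : ∀ y : Fin 3 → F,
      eval y f = ∑ m ∈ f.support, coeff m f * eval y (monomial m 1) := fun y => by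
    simp [eval_eq]
  calc w ⬝ᵥ evalRep b d ⟨f, hf⟩
      = ∑ m ∈ f.support, coeff m f * w ⬝ᵥ (fun r => eval r.point (monomial m (1 : F))) := by
        simp only [dotProduct, evalRep_apply, hexpand, Finset.mul_sum]
        rw [Finset.sum_comm]
        simp only [mul_left_comm]
    _ = 0 := Finset.sum_eq_zero fun m hm => by
        rw [hmono m (mem_Sd_iff.mp hf m (mem_support_iff.mp hm)), mul_zero]

def repWeight (γ : F) (t : ℕ) (α β : F) : Rep F → F
  | .inl (a, _) => γ * a ^ t
  | .inr (.inl _) => α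
  | .inr (.inr _) => β

lemma repWeight_dotProduct (γ : F) (t : ℕ) (α β : F) (m : Fin 3 →₀ ℕ) :
    repWeight γ t α β ⬝ᵥ (fun r => eval r.point (monomial m (1 : F))) =
      γ * (∑ a : F, a ^ (t + m 1)) * (∑ c : F, c ^ m 2) +
        0 ^ m 0 * (α * ∑ c : F, c ^ m 2 + β * 0 ^ m 1) := by
  simp [dotProduct, Fintype.sum_prod_type, eval_monomial, Finsupp.prod_pow, Fin.prod_univ_three,
    repWeight, Rep.point, Finset.mul_sum, Finset.sum_mul, pow_add, mul_add]
  rw [Finset.sum_comm]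
  ring_nf

lemma range_evalRep_ne_top_of_not_dvd {b d : ℕ} (h : ¬b ∣ d) :
    LinearMap.range (evalRep (F := F) b d) ≠ ⊤ := by
  refine range_evalRep_ne_top_of_dotProduct (w := repWeight 0 0 0 1)
    (fun hw => one_ne_zero (congr_fun hw (.inr (.inr ())))) fun m hm => ?_
  have hm01 : m 0 ≠ 0 ∨ m 1 ≠ 0 := by
    by_contra! h01
    exact h ⟨m 2, by rw [← hm, h01.1, h01.2, zero_add, zero_add, mul_comm]⟩
  rw [repWeight_dotProduct]
  rcases hm01 with h0 | h1 <;> simp [zero_pow, *]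

lemma range_evalRep_ne_top_of_le {b d₀ : ℕ} (hb : 0 < b) (hd₀ : d₀ ≤ Fintype.card F - 1) :
    LinearMap.range (evalRep (F := F) b (d₀ * b)) ≠ ⊤ := by
  set n := Fintype.card F - 1 with hn
  have hn0 : n ≠ 0 := FiniteField.card_sub_one_ne_zero F
  refine range_evalRep_ne_top_of_dotProduct (w := repWeight 0 0 1 (if d₀ = n then 1 else 0))
    (fun hw => one_ne_zero (congr_fun hw (.inr (.inl 0)))) fun m hm => ?_
  rw [repWeight_dotProduct, zero_mul, zero_mul, zero_add, one_mul]
  rcases Nat.eq_zero_or_pos (m 0) with h0 | h0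
  swap
  · rw [zero_pow h0.ne', zero_mul]
  rcases Nat.eq_zero_or_pos (m 1) with h1 | h1
  · have hm2 : m 2 = d₀ := Nat.eq_of_mul_eq_mul_right hb (by omega)
    rw [h0, h1, hm2, FiniteField.sum_pow, ← hn]
    by_cases hd : d₀ = n
    · simp [hd, hn0]
    · have : ¬(d₀ ≠ 0 ∧ n ∣ d₀) := fun h => hd (le_antisymm hd₀ (Nat.le_of_dvd (by omega) h.2))
      simp [hd, this]
  · have hm2 : m 2 < n := by
      have : m 2 * b < n * b := by nlinarith
      exact lt_of_mul_lt_mul_right this (Nat.zero_le b)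
    rw [FiniteField.sum_pow_lt_card_sub_one F _ hm2, zero_pow h1.ne']
    ring

lemma range_evalRep_ne_top_of_lt_of_le {b d₀ : ℕ} (hb : 0 < b)
    (hlo : Fintype.card F - 1 < d₀)
    (hhi : d₀ * b ≤ (Fintype.card F - 1) * b + (Fintype.card F - 1)) :
    LinearMap.range (evalRep (F := F) b (d₀ * b)) ≠ ⊤ := by
  set n := Fintype.card F - 1 with hn
  have hn0 : n ≠ 0 := FiniteField.card_sub_one_ne_zero F
  have hnd : n * b < d₀ * b := Nat.mul_lt_mul_of_pos_right hlo hb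
  -- `t = n (b + 1) - d`: among monomials with `m 2 = n`, `∑ a, a ^ (t + m 1) ≠ 0` iff `m 0 = 0`.
  refine range_evalRep_ne_top_of_dotProduct
    (w := repWeight 1 (n + n * b - d₀ * b) 1 (if n ∣ d₀ then 1 else 0))
    (fun hw => by simpa [repWeight] using congr_fun hw (.inl ((1 : F), 0))) fun m hm => ?_
  rw [repWeight_dotProduct, one_mul, one_mul]
  rcases Nat.eq_zero_or_pos (m 0) with h0 | h0
  swap
  · suffices (∑ a : F, a ^ (n + n * b - d₀ * b + m 1)) * ∑ c : F, c ^ m 2 = 0 by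
      rw [this, zero_pow h0.ne', zero_mul, add_zero]
    rw [FiniteField.sum_pow (m 2), ← hn]
    split_ifs with hm2
    · have : n * b ≤ m 2 * b :=
        Nat.mul_le_mul_right b (Nat.le_of_dvd (Nat.pos_of_ne_zero hm2.1) hm2.2)
      rw [FiniteField.sum_pow_lt_card_sub_one F _ (by omega), zero_mul]
    · rw [mul_zero]
  rw [h0, pow_zero, one_mul]
  rcases Nat.eq_zero_or_pos (m 1) with h1 | h1
  · have hm2 : m 2 = d₀ := Nat.eq_of_mul_eq_mul_right hb (by omega)
    rw [h1, hm2, add_zero, pow_zero, mul_one]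
    by_cases hdvd : n ∣ d₀
    · obtain ⟨rfl, rfl⟩ := Nat.eq_one_and_eq_two_mul_of_dvd hb hn0 hdvd hlo hhi
      rw [show n + n * 1 - 2 * n * 1 = 0 by omega]
      simp [FiniteField.sum_pow, ← hn, hn0]
    · simp [FiniteField.sum_pow, ← hn, hdvd]
  · have hm2lt : m 2 < 2 * n := by
      have : m 2 * b < (2 * n) * b := by nlinarith
      exact Nat.lt_of_mul_lt_mul_right this
    rw [zero_pow h1.ne', mul_zero, add_zero, FiniteField.sum_pow (m 2), ← hn]
    split_ifs with hm2
    · have hm2n : m 2 = n := Nat.eq_of_dvd_of_lt_two_mul hm2.1 hm2.2 hm2lt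
      have ht : n + n * b - d₀ * b + m 1 = n := by rw [hm2n] at hm; omega
      rw [ht, FiniteField.sum_pow n, ← hn, if_pos ⟨hn0, dvd_rfl⟩]
      ring
    · ring

theorem range_evalRep_eq_top_iff {b : ℕ} (hb : 0 < b) (d : ℕ) :
    LinearMap.range (evalRep (F := F) b d) = ⊤ ↔
      ∃ d₀, d = d₀ * b ∧ (Fintype.card F - 1) * b + (Fintype.card F - 1) < d₀ * b := by
  refine ⟨fun htop => ?_, fun ⟨d₀, hd, h⟩ => hd ▸ range_evalRep_eq_top h⟩
  obtain ⟨d₀, rfl⟩ : b ∣ d := by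
    by_contra h
    exact range_evalRep_ne_top_of_not_dvd h htop
  refine ⟨d₀, mul_comm _ _, ?_⟩
  rw [mul_comm b] at htop
  by_contra! hle
  rcases le_or_gt d₀ (Fintype.card F - 1) with h | h
  · exact range_evalRep_ne_top_of_le hb h htop
  · exact range_evalRep_ne_top_of_lt_of_le hb h hle htop

end WeightedProjectivePlane

open WeightedProjectivePlane

/-- Theorem (regularity set of `Y = ℙ(1,1,b)(F_q)`): for every `d`,
`H_Y(d) = q² + q + 1` iff `d = d₀·b` for some `d₀ ≥ q + ⌊(q−1)/b⌋`, i.e.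
`reg(Y) = (q + ⌊(q−1)/b⌋)b + ℕb`. -/
theorem regularity_set_P11b (q : ℕ) (hq : q = Fintype.card F) (b : ℕ) (hb : 0 < b) :
    ∀ d : ℕ, HY F b d = q ^ 2 + q + 1 ↔
      ∃ d₀ : ℕ, d = d₀ * b ∧ q + (q - 1) / b ≤ d₀ := by
  intro d
  have hq1 : 0 < q := hq ▸ Fintype.card_pos
  subst hq
  rw [HY_eq_card_iff hb, range_evalRep_eq_top_iff hb]
  refine exists_congr fun d₀ => and_congr_right fun _ => ?_
  rw [Nat.mul_add_self_lt_mul_iff hb]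
  omega
end
end
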